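/- Let f : I ⊆ (0,∞) → (0,∞) be differentiable on I°, let a, b ∈ I° with a < b, f' integrable on [a,b], and suppose |f'|^q is s-geometrically convex on [a,b] for some q ≥ 1 and s ∈ (0,1]. If |f'(a)| ≤ 1 ≤ |f'(b)|, then |f(√(ab)) − (1/(ln b − ln a)) ∫_a^b f(x)/x dx| ≤ ln(b/a) · (1/2)^{3−1/q} · [ a|f'(a)|^s |f'(b)|^{1−s} g₁(θ₃)^{1/q} + b|f'(b)| g₁(θ₄)^{1/q} ]. -/

import Mathlib

open Real MeasureTheory Set

/-- `g` is `s`-geometrically convex on `J`. -/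
def SGeometricallyConvexOn (s : ℝ) (J : Set ℝ) (g : ℝ → ℝ) : Prop :=
  ∀ x ∈ J, ∀ y ∈ J, ∀ t ∈ Set.Icc (0:ℝ) 1,
    g (x ^ t * y ^ (1 - t)) ≤ g x ^ t ^ s * g y ^ (1 - t) ^ s

noncomputable def g₁ (u : ℝ) : ℝ :=
  if u = 1 then 1/2 else (u * Real.log u - u + 1) / (Real.log u) ^ 2

noncomputable def g₂ (u : ℝ) : ℝ :=
  if u = 1 then 1 else (u - 1) / Real.log u

/-!
With `A t = b ^ t * a ^ (1 - t)` and `φ t = f (A t)`, the substitution `x = A t` turns the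
left-hand side into `|φ (1/2) - ∫₀¹ φ|`, and integrating by parts against `t` on `[0, 1/2]` and
against `t - 1` on `[1/2, 1]` bounds it by `log (b/a)` times `∫₀^{1/2} t A_t |f' (A_t)|` plus the
same integral at `1 - t`.

Since `|f' a| ≤ 1 ≤ |f' b|`, the Bernoulli inequality `t ^ s ≤ s t + 1 - s` and
`s (1 - t) ≤ (1 - t) ^ s` turn `s`-geometric convexity into
`(A_t |f' (A_t)|) ^ q ≤ (a |f' a| ^ s) ^ (q (1 - t)) (b |f' b| ^ s) ^ (q t) |f' b| ^ (q (1 - s))`,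
an exponential in `t`. Hölder's inequality for the weight `t` on `[0, 1/2]` and the closed form
`∫₀^{1/2} t u ^ (2 t) dt = g₁ u / 4` finish the estimate.
-/

theorem abs_sub_integral_le_of_hasDerivAt {φ φ' : ℝ → ℝ}
    (hφ : ∀ t ∈ Icc (0:ℝ) 1, HasDerivAt φ (φ' t) t) (hφ' : IntervalIntegrable φ' volume 0 1) :
    |φ (1/2) - ∫ t in (0:ℝ)..1, φ t| ≤
      (∫ t in (0:ℝ)..(1/2), t * |φ' t|) + ∫ t in (0:ℝ)..(1/2), t * |φ' (1 - t)| := by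
  have hleft : uIcc (0:ℝ) (1/2) ⊆ Icc 0 1 := by
    rw [uIcc_of_le (by norm_num)]; exact Icc_subset_Icc le_rfl (by norm_num)
  have hright : uIcc (1/2:ℝ) 1 ⊆ Icc 0 1 := by
    rw [uIcc_of_le (by norm_num)]; exact Icc_subset_Icc (by norm_num) le_rfl
  have hcont : ContinuousOn φ (Icc 0 1) := fun t ht => (hφ t ht).continuousAt.continuousWithinAt
  have hφint : ∀ {c d}, uIcc c d ⊆ Icc (0:ℝ) 1 → IntervalIntegrable φ volume c d :=
    fun h => (hcont.mono h).intervalIntegrable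
  have hφ'int : ∀ {c d}, uIcc c d ⊆ Icc (0:ℝ) 1 → IntervalIntegrable φ' volume c d :=
    fun h => hφ'.mono_set (by rwa [uIcc_of_le zero_le_one])
  have parts_left := intervalIntegral.integral_mul_deriv_eq_deriv_mul (u := fun t => t)
    (fun t _ => hasDerivAt_id t) (fun t ht => hφ t (hleft ht)) intervalIntegrable_const
    (hφ'int hleft)
  have parts_right := intervalIntegral.integral_mul_deriv_eq_deriv_mul (u := fun t => t - 1)
    (fun t _ => (hasDerivAt_id t).sub_const 1) (fun t ht => hφ t (hright ht))
    intervalIntegrable_const (hφ'int hright)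
  have split := intervalIntegral.integral_add_adjacent_intervals (hφint hleft) (hφint hright)
  have identity : φ (1/2) - ∫ t in (0:ℝ)..1, φ t =
      (∫ t in (0:ℝ)..(1/2), t * φ' t) + ∫ t in (1/2:ℝ)..1, (t - 1) * φ' t := by
    simp only [one_mul] at parts_left parts_right
    rw [parts_left, parts_right, ← split]
    ring
  have reflect : ∫ t in (1/2:ℝ)..1, |(t - 1) * φ' t| = ∫ t in (0:ℝ)..(1/2), t * |φ' (1 - t)| := by
    have := intervalIntegral.integral_comp_sub_left (fun t => |(t - 1) * φ' t|)
      (a := 0) (b := 1/2) 1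
    norm_num at this
    simp only [abs_mul]
    rw [← this]
    refine intervalIntegral.integral_congr fun t ht => ?_
    rw [uIcc_of_le (by norm_num)] at ht
    simp [abs_of_nonneg ht.1]
  rw [identity, ← reflect]
  refine (abs_add_le _ _).trans (add_le_add ?_ ?_)
  · refine (intervalIntegral.abs_integral_le_integral_abs (by norm_num)).trans_eq ?_
    refine intervalIntegral.integral_congr fun t ht => ?_
    rw [uIcc_of_le (by norm_num)] at ht
    simp [abs_of_nonneg ht.1]
  · exact intervalIntegral.abs_integral_le_integral_abs (by norm_num)

section GeometricPath

variable {a b : ℝ}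

theorem rpow_mul_rpow_one_sub_eq_exp (ha : 0 < a) (hb : 0 < b) (t : ℝ) :
    b ^ t * a ^ (1 - t) = exp (log a + t * (log b - log a)) := by
  rw [rpow_def_of_pos hb, rpow_def_of_pos ha, ← exp_add]
  ring_nf

theorem hasDerivAt_rpow_mul_rpow_one_sub (ha : 0 < a) (hb : 0 < b) (t : ℝ) :
    HasDerivAt (fun t => b ^ t * a ^ (1 - t)) (b ^ t * a ^ (1 - t) * (log b - log a)) t := by
  simp only [rpow_mul_rpow_one_sub_eq_exp ha hb]
  simpa using (((hasDerivAt_id t).mul_const (log b - log a)).const_add (log a)).exp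

theorem continuous_rpow_mul_rpow_one_sub (ha : 0 < a) (hb : 0 < b) :
    Continuous fun t : ℝ => b ^ t * a ^ (1 - t) :=
  continuous_iff_continuousAt.2 fun t => (hasDerivAt_rpow_mul_rpow_one_sub ha hb t).continuousAt

theorem rpow_mul_rpow_one_sub_mem_Icc (ha : 0 < a) (hab : a ≤ b) {t : ℝ} (ht : t ∈ Icc (0:ℝ) 1) :
    b ^ t * a ^ (1 - t) ∈ Icc a b := by
  have hb : 0 < b := ha.trans_le hab
  have h1t : 0 ≤ 1 - t := by linarith [ht.2]
  constructor
  · calc a = a ^ t * a ^ (1 - t) := by rw [← rpow_add ha, add_sub_cancel, rpow_one]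
      _ ≤ b ^ t * a ^ (1 - t) := by gcongr; exact ht.1
  · calc b ^ t * a ^ (1 - t) ≤ b ^ t * b ^ (1 - t) := by gcongr
      _ = b := by rw [← rpow_add hb, add_sub_cancel, rpow_one]

theorem rpow_half_mul_rpow_half (ha : 0 < a) (hb : 0 < b) :
    b ^ (1/2 : ℝ) * a ^ (1 - 1/2 : ℝ) = √(a * b) := by
  rw [sqrt_eq_rpow, mul_rpow ha.le hb.le]
  norm_num [mul_comm]

theorem integral_div_self_eq (ha : 0 < a) (hab : a ≤ b) {f : ℝ → ℝ}
    (hf : ContinuousOn f (Icc a b)) :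
    ∫ x in a..b, f x / x = (log b - log a) * ∫ t in (0:ℝ)..1, f (b ^ t * a ^ (1 - t)) := by
  have hb : 0 < b := ha.trans_le hab
  have himage : (fun t : ℝ => b ^ t * a ^ (1 - t)) '' uIcc 0 1 ⊆ Icc a b := by
    rw [uIcc_of_le zero_le_one]
    exact image_subset_iff.2 fun t ht => by exact rpow_mul_rpow_one_sub_mem_Icc ha hab ht
  have hcont : ContinuousOn (fun x => f x / x) (Icc a b) :=
    hf.div continuousOn_id fun x hx => (ha.trans_le hx.1).ne'
  have key := intervalIntegral.integral_comp_mul_deriv'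
    (fun t _ => hasDerivAt_rpow_mul_rpow_one_sub ha hb t)
    (((continuous_rpow_mul_rpow_one_sub ha hb).mul continuous_const).continuousOn)
    (hcont.mono himage)
  simp only [rpow_zero, sub_zero, sub_self, rpow_one, one_mul, mul_one, Function.comp_def] at key
  rw [← key, ← intervalIntegral.integral_const_mul]
  refine intervalIntegral.integral_congr fun t _ => ?_
  have : b ^ t * a ^ (1 - t) ≠ 0 := by positivity
  field_simp

theorem monotone_rpow_mul_rpow_one_sub (ha : 0 < a) (hab : a ≤ b) :
    Monotone fun t : ℝ => b ^ t * a ^ (1 - t) := by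
  have hL : 0 ≤ log b - log a := sub_nonneg.2 (log_le_log ha hab)
  intro s t hst
  simp only [rpow_mul_rpow_one_sub_eq_exp ha (ha.trans_le hab)]
  gcongr

theorem intervalIntegrable_comp_rpow_mul_rpow_one_sub (ha : 0 < a) (hab : a ≤ b) {g : ℝ → ℝ}
    (hg : IntervalIntegrable g volume a b) :
    IntervalIntegrable (fun t => g (b ^ t * a ^ (1 - t)) * (b ^ t * a ^ (1 - t) * (log b - log a)))
      volume 0 1 := by
  have himage : (fun t : ℝ => b ^ t * a ^ (1 - t)) '' Icc 0 1 ⊆ Icc a b :=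
    image_subset_iff.2 fun t ht => by exact rpow_mul_rpow_one_sub_mem_Icc ha hab ht
  have := (integrableOn_image_iff_integrableOn_deriv_smul_of_monotoneOn measurableSet_Icc
    (fun t _ => (hasDerivAt_rpow_mul_rpow_one_sub ha (ha.trans_le hab) t).hasDerivWithinAt)
    ((monotone_rpow_mul_rpow_one_sub ha hab).monotoneOn _) g).1
    (((intervalIntegrable_iff_integrableOn_Icc_of_le hab).1 hg).mono_set himage)
  simp only [smul_eq_mul, mul_comm _ (g _)] at this
  exact (intervalIntegrable_iff_integrableOn_Icc_of_le zero_le_one).2 this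

end GeometricPath

theorem abs_sub_integral_div_self_le {f f' : ℝ → ℝ} {a b : ℝ} (ha : 0 < a) (hab : a < b)
    (hf : ∀ x ∈ Icc a b, HasDerivAt f (f' x) x) (hf' : IntervalIntegrable f' volume a b) :
    |f √(a * b) - 1 / (log b - log a) * ∫ x in a..b, f x / x| ≤
      (log b - log a) * ((∫ t in (0:ℝ)..(1/2), t * (b ^ t * a ^ (1 - t) *
          |f' (b ^ t * a ^ (1 - t))|)) +
        ∫ t in (0:ℝ)..(1/2), t * (b ^ (1 - t) * a ^ t * |f' (b ^ (1 - t) * a ^ t)|)) := by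
  have hb : 0 < b := ha.trans hab
  have hL : 0 < log b - log a := sub_pos.2 (log_lt_log ha hab)
  have hφ : ∀ t ∈ Icc (0:ℝ) 1, HasDerivAt (fun t => f (b ^ t * a ^ (1 - t)))
      (f' (b ^ t * a ^ (1 - t)) * (b ^ t * a ^ (1 - t) * (log b - log a))) t :=
    fun t ht => (hf _ (rpow_mul_rpow_one_sub_mem_Icc ha hab.le ht)).comp t
      (hasDerivAt_rpow_mul_rpow_one_sub ha hb t)
  have hφ' : ∀ t : ℝ, |f' (b ^ t * a ^ (1 - t)) * (b ^ t * a ^ (1 - t) * (log b - log a))| =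
      (log b - log a) * (b ^ t * a ^ (1 - t) * |f' (b ^ t * a ^ (1 - t))|) := fun t => by
    rw [abs_mul, abs_of_pos (mul_pos (by positivity) hL)]
    ring
  have bound := abs_sub_integral_le_of_hasDerivAt hφ
    (intervalIntegrable_comp_rpow_mul_rpow_one_sub ha hab.le hf')
  simp only [hφ', mul_left_comm _ (log b - log a), intervalIntegral.integral_const_mul] at bound
  simp only [sub_sub_cancel] at bound
  rw [integral_div_self_eq ha hab.le fun x hx => (hf x hx).continuousAt.continuousWithinAt,
    one_div, inv_mul_cancel_left₀ hL.ne', ← rpow_half_mul_rpow_half ha hb, mul_add]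
  exact bound

theorem g₁_nonneg {u : ℝ} (hu : 0 ≤ u) : 0 ≤ g₁ u := by
  unfold g₁
  split_ifs with h
  · norm_num
  rcases hu.eq_or_lt with rfl | hu
  · simp
  refine div_nonneg ?_ (sq_nonneg _)
  have := mul_le_mul_of_nonneg_left (log_le_sub_one_of_pos (inv_pos.2 hu)) hu.le
  rw [log_inv, mul_sub, mul_inv_cancel₀ hu.ne'] at this
  linarith

theorem integral_mul_rpow_two_mul {u : ℝ} (hu : 0 < u) :
    ∫ t in (0:ℝ)..(1/2), t * u ^ (2 * t) = g₁ u / 4 := by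
  rcases eq_or_ne u 1 with rfl | hne
  · simp only [one_rpow, mul_one, g₁, integral_id]
    norm_num
  have hlog : log u ≠ 0 := log_ne_zero_of_pos_of_ne_one hu hne
  set c := 2 * log u
  have hc : c ≠ 0 := mul_ne_zero two_ne_zero hlog
  have hderiv : ∀ t ∈ uIcc (0:ℝ) (1/2),
      HasDerivAt (fun t => (t / c - 1 / c ^ 2) * exp (c * t)) (t * u ^ (2 * t)) t := by
    intro t _
    rw [rpow_def_of_pos hu, show log u * (2 * t) = c * t by ring]
    refine ((((hasDerivAt_id' t).div_const c).sub_const (1 / c ^ 2)).fun_mul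
      ((hasDerivAt_id' t).const_mul c).exp).congr_deriv ?_
    field_simp
    ring
  rw [intervalIntegral.integral_eq_sub_of_hasDerivAt hderiv
    ((continuous_id.mul (continuous_const.rpow (continuous_const.mul continuous_id)
      fun _ => Or.inl hu.ne')).intervalIntegrable _ _)]
  rw [show c * (1 / 2) = log u by ring, exp_log hu, mul_zero, exp_zero, g₁, if_neg hne]
  field_simp
  ring

theorem integral_mul_le_rpow_integral_mul_rpow {q : ℝ} (hq : 1 ≤ q) {H : ℝ → ℝ}
    (hH : Continuous H) (hH0 : ∀ t, 0 ≤ H t) :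
    ∫ t in (0:ℝ)..(1/2), t * H t ≤
      (1/8 : ℝ) ^ (1 - 1/q) * (∫ t in (0:ℝ)..(1/2), t * H t ^ q) ^ (1/q) := by
  rcases hq.eq_or_lt with rfl | hq1
  · simp
  set p := q.conjExponent
  have hpq : p.HolderConjugate q := (Real.HolderConjugate.conjExponent hq1).symm
  have hp_inv : 1 / p = 1 - 1 / q := by
    rw [eq_sub_iff_add_eq, one_div, one_div, hpq.inv_add_inv_eq_one]
  set μ := volume.restrict (Ioc (0:ℝ) (1/2))
  have : IsFiniteMeasure μ := isFiniteMeasure_restrict.2 measure_Ioc_lt_top.ne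
  have memLp : ∀ F : ℝ → ℝ, Continuous F → ∀ r, MemLp F r μ := fun F hF r => by
    obtain ⟨M, hM⟩ := (isCompact_Icc (a := (0:ℝ)) (b := 1/2)).exists_bound_of_continuousOn
      hF.continuousOn
    refine MemLp.of_bound hF.aestronglyMeasurable M ?_
    filter_upwards [ae_restrict_mem measurableSet_Ioc] with t ht using hM t (Ioc_subset_Icc_self ht)
  have nonneg : ∀ {F : ℝ → ℝ}, (∀ t ∈ Ioc (0:ℝ) (1/2), 0 ≤ F t) → 0 ≤ᵐ[μ] F := fun h =>
    (ae_restrict_mem measurableSet_Ioc).mono h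
  -- Hölder's inequality for the factorisation `t * H t = t ^ (1/p) * (t ^ (1/q) * H t)`
  have holder := integral_mul_le_Lp_mul_Lq_of_nonneg hpq
    (nonneg fun t ht => rpow_nonneg ht.1.le (1/p))
    (nonneg fun t ht => mul_nonneg (rpow_nonneg ht.1.le (1/q)) (hH0 t))
    (memLp _ (continuous_id.rpow_const fun _ => Or.inr hpq.one_div_nonneg) _)
    (memLp _ ((continuous_id.rpow_const fun _ => Or.inr (by positivity)).mul hH) _)
  have toInterval : ∀ {F G : ℝ → ℝ}, (∀ t ∈ Ioc (0:ℝ) (1/2), F t = G t) →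
      ∫ t, F t ∂μ = ∫ t in (0:ℝ)..(1/2), G t := fun h => by
    rw [intervalIntegral.integral_of_le (by norm_num)]
    exact setIntegral_congr_fun measurableSet_Ioc h
  rw [toInterval (G := fun t => t * H t) fun t ht => by
      rw [← mul_assoc, ← rpow_add ht.1, one_div, one_div, hpq.inv_add_inv_eq_one, rpow_one],
    toInterval (G := fun t => t) fun t ht => by
      rw [← rpow_mul ht.1.le, one_div_mul_cancel hpq.ne_zero, rpow_one],
    toInterval (G := fun t => t * H t ^ q) fun t ht => by
      rw [mul_rpow (rpow_nonneg ht.1.le _) (hH0 t), ← rpow_mul ht.1.le,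
        one_div_mul_cancel hpq.symm.ne_zero, rpow_one],
    integral_id, hp_inv] at holder
  convert holder using 3
  norm_num

theorem integral_mul_le_of_rpow_le_mul_rpow_two_mul {q K u : ℝ} (hq : 1 ≤ q) (hK : 0 ≤ K)
    (hu : 0 < u) {h : ℝ → ℝ} (h0 : ∀ t ∈ Icc (0:ℝ) (1/2), 0 ≤ h t)
    (hle : ∀ t ∈ Icc (0:ℝ) (1/2), h t ^ q ≤ K * u ^ (2 * t)) :
    ∫ t in (0:ℝ)..(1/2), t * h t ≤ (1/2 : ℝ) ^ (3 - 1/q) * (K * g₁ u) ^ (1/q) := by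
  have hq0 : 0 < q := zero_lt_one.trans_le hq
  have hg₁ := g₁_nonneg hu.le
  by_cases hint : IntervalIntegrable (fun t => t * h t) volume 0 (1/2)
  swap
  · rw [intervalIntegral.integral_undef hint]
    positivity
  set H : ℝ → ℝ := fun t => (K * u ^ (2 * t)) ^ q⁻¹
  have hH0 : ∀ t : ℝ, 0 ≤ K * u ^ (2 * t) := fun t => by positivity
  have hH : Continuous H := (continuous_const.mul (continuous_const.rpow
    (continuous_const.mul continuous_id) fun _ => Or.inl hu.ne')).rpow_const
      fun _ => Or.inr (by positivity)
  have h_le_H : ∀ t ∈ Icc (0:ℝ) (1/2), t * h t ≤ t * H t := fun t ht =>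
    mul_le_mul_of_nonneg_left ((le_rpow_inv_iff_of_pos (h0 t ht) (hH0 t) hq0).2 (hle t ht)) ht.1
  have integral_H : ∫ t in (0:ℝ)..(1/2), t * H t ^ q = K * g₁ u / 4 := by
    simp only [H, rpow_inv_rpow (hH0 _) hq0.ne', mul_left_comm _ K,
      intervalIntegral.integral_const_mul, integral_mul_rpow_two_mul hu]
    ring
  have powers : (1/8 : ℝ) ^ (1 - 1/q) * (1/4 : ℝ) ^ (1/q) = (1/2 : ℝ) ^ (3 - 1/q) := by
    rw [show (1/8 : ℝ) = (1/2) ^ (3:ℝ) by norm_num, show (1/4 : ℝ) = (1/2) ^ (2:ℝ) by norm_num,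
      ← rpow_mul (by norm_num), ← rpow_mul (by norm_num), ← rpow_add (by norm_num)]
    ring_nf
  calc ∫ t in (0:ℝ)..(1/2), t * h t
      ≤ ∫ t in (0:ℝ)..(1/2), t * H t :=
        intervalIntegral.integral_mono_on (by norm_num) hint
          ((continuous_id.mul hH).intervalIntegrable _ _) h_le_H
    _ ≤ (1/8 : ℝ) ^ (1 - 1/q) * (∫ t in (0:ℝ)..(1/2), t * H t ^ q) ^ (1/q) :=
        integral_mul_le_rpow_integral_mul_rpow hq hH fun t => rpow_nonneg (hH0 t) _
    _ = (1/2 : ℝ) ^ (3 - 1/q) * (K * g₁ u) ^ (1/q) := by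
        rw [integral_H, div_eq_mul_one_div (K * g₁ u), mul_rpow (by positivity) (by norm_num),
          ← powers]
        ring

theorem integral_mul_le_of_rpow_le {q C D E : ℝ} (hq : 1 ≤ q) (hC : 0 ≤ C) (hD : 0 ≤ D)
    (hE : 0 ≤ E) {h : ℝ → ℝ} (h0 : ∀ t ∈ Icc (0:ℝ) (1/2), 0 ≤ h t)
    (hle : ∀ t ∈ Icc (0:ℝ) (1/2), h t ^ q ≤ C ^ (q * (1 - t)) * D ^ (q * t) * E) :
    ∫ t in (0:ℝ)..(1/2), t * h t ≤
      (1/2 : ℝ) ^ (3 - 1/q) * (C * E ^ (1/q) * g₁ ((D / C) ^ (q/2)) ^ (1/q)) := by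
  have hq0 : 0 < q := zero_lt_one.trans_le hq
  have hg₁ := g₁_nonneg (rpow_nonneg (div_nonneg hD hC) (q/2))
  by_cases hCD : C = 0 ∨ D = 0
  · have h_eq_zero : ∀ t ∈ Ioc (0:ℝ) (1/2), t * h t = 0 := by
      intro t ht
      have hbound : C ^ (q * (1 - t)) * D ^ (q * t) = 0 := by
        have : q * (1 - t) ≠ 0 ∧ q * t ≠ 0 := ⟨by nlinarith [ht.2], by nlinarith [ht.1]⟩
        rcases hCD with rfl | rfl <;> simp [zero_rpow this.1, zero_rpow this.2]
      have hle' := hle t (Ioc_subset_Icc_self ht)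
      rw [hbound, zero_mul] at hle'
      have : h t = 0 := by
        by_contra hne
        exact (rpow_pos_of_pos ((h0 t (Ioc_subset_Icc_self ht)).lt_of_ne' hne) q).not_ge hle'
      rw [this, mul_zero]
    rw [intervalIntegral.integral_of_le (by norm_num), setIntegral_congr_fun measurableSet_Ioc
      h_eq_zero, integral_zero]
    positivity
  push Not at hCD
  have hCpos := hC.lt_of_ne' hCD.1
  have hDCpos := div_pos (hD.lt_of_ne' hCD.2) hCpos
  have key := integral_mul_le_of_rpow_le_mul_rpow_two_mul hq (by positivity : 0 ≤ C ^ q * E)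
    (rpow_pos_of_pos hDCpos (q/2)) h0 fun t ht => by
      convert hle t ht using 1
      rw [← rpow_mul hDCpos.le, div_rpow hD hC, mul_sub, rpow_sub hCpos]
      field_simp
  rwa [mul_rpow (by positivity) hg₁, mul_rpow (by positivity) hE, ← rpow_mul hC,
    mul_one_div_cancel hq0.ne', rpow_one] at key

theorem rpow_rpow_mul_rpow_rpow_le {α β s t : ℝ} (hα0 : 0 ≤ α) (hα1 : α ≤ 1) (hβ : 1 ≤ β)
    (hs : s ∈ Ioc (0:ℝ) 1) (ht : t ∈ Icc (0:ℝ) 1) :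
    β ^ t ^ s * α ^ (1 - t) ^ s ≤ β ^ (s * t + (1 - s)) * α ^ (s * (1 - t)) := by
  have h1t : 0 ≤ 1 - t := by linarith [ht.2]
  have bernoulli : t ^ s ≤ s * t + (1 - s) := by
    have := rpow_one_add_le_one_add_mul_self (s := t - 1) (by linarith [ht.1]) hs.1.le hs.2
    rw [add_sub_cancel] at this
    linarith
  have concave : s * (1 - t) ≤ (1 - t) ^ s :=
    (mul_le_of_le_one_left h1t hs.2).trans (self_le_rpow_of_le_one h1t (by linarith [ht.1]) hs.2)
  exact mul_le_mul (rpow_le_rpow_of_exponent_le hβ bernoulli)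
    (rpow_le_rpow_of_exponent_ge' hα0 hα1 (mul_nonneg hs.1.le h1t) concave)
    (rpow_nonneg hα0 _) (rpow_nonneg (zero_le_one.trans hβ) _)

theorem rpow_mul_rpow_one_sub_mul_rpow_eq {a b α β q s t : ℝ} (ha : 0 < a) (hb : 0 < b)
    (hα : 0 ≤ α) (hβ : 0 < β) :
    (b ^ t * a ^ (1 - t)) ^ q * ((β ^ q) ^ (s * t + (1 - s)) * (α ^ q) ^ (s * (1 - t))) =
      (a * α ^ s) ^ (q * (1 - t)) * (b * β ^ s) ^ (q * t) * β ^ (q * (1 - s)) := by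
  rw [mul_rpow (by positivity) (by positivity), mul_rpow ha.le (by positivity),
    mul_rpow hb.le (by positivity)]
  simp only [← rpow_mul ha.le, ← rpow_mul hb.le, ← rpow_mul hα, ← rpow_mul hβ.le]
  rw [show q * (s * t + (1 - s)) = s * (q * t) + q * (1 - s) by ring, rpow_add hβ,
    show q * (s * (1 - t)) = s * (q * (1 - t)) by ring, mul_comm t q, mul_comm (1 - t) q]
  ring

theorem mul_abs_rpow_le_of_sGeometricallyConvexOn {g : ℝ → ℝ} {a b q s t : ℝ} (ha : 0 < a)
    (hab : a ≤ b) (hq : 0 ≤ q) (hs : s ∈ Ioc (0:ℝ) 1)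
    (hconv : SGeometricallyConvexOn s (Icc a b) fun x => |g x| ^ q)
    (hga : |g a| ≤ 1) (hgb : 1 ≤ |g b|) (ht : t ∈ Icc (0:ℝ) 1) :
    (b ^ t * a ^ (1 - t) * |g (b ^ t * a ^ (1 - t))|) ^ q ≤
      (a * |g a| ^ s) ^ (q * (1 - t)) * (b * |g b| ^ s) ^ (q * t) * |g b| ^ (q * (1 - s)) := by
  have hb : 0 < b := ha.trans_le hab
  have hA : 0 ≤ b ^ t * a ^ (1 - t) := by positivity
  calc (b ^ t * a ^ (1 - t) * |g (b ^ t * a ^ (1 - t))|) ^ q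
      = (b ^ t * a ^ (1 - t)) ^ q * |g (b ^ t * a ^ (1 - t))| ^ q := mul_rpow hA (abs_nonneg _)
    _ ≤ (b ^ t * a ^ (1 - t)) ^ q * ((|g b| ^ q) ^ t ^ s * (|g a| ^ q) ^ (1 - t) ^ s) := by
        gcongr
        exact hconv b (right_mem_Icc.2 hab) a (left_mem_Icc.2 hab) t ht
    _ ≤ (b ^ t * a ^ (1 - t)) ^ q *
          ((|g b| ^ q) ^ (s * t + (1 - s)) * (|g a| ^ q) ^ (s * (1 - t))) :=
        mul_le_mul_of_nonneg_left (rpow_rpow_mul_rpow_rpow_le (by positivity)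
          (rpow_le_one (abs_nonneg _) hga hq) (one_le_rpow hgb hq) hs ht) (by positivity)
    _ = _ := rpow_mul_rpow_one_sub_mul_rpow_eq ha hb (abs_nonneg _) (zero_lt_one.trans_le hgb)

theorem rpow_mul_rpow_one_div {x q r : ℝ} (hx : 0 ≤ x) (hq : q ≠ 0) :
    (x ^ (q * r)) ^ (1 / q) = x ^ r := by
  rw [← rpow_mul hx, mul_one_div, mul_div_cancel_left₀ r hq]

section SGeometricallyConvex

variable {g : ℝ → ℝ} {a b q s : ℝ}

theorem integral_mul_le_of_sGeometricallyConvexOn (ha : 0 < a) (hab : a ≤ b) (hq : 1 ≤ q)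
    (hs : s ∈ Ioc (0:ℝ) 1) (hconv : SGeometricallyConvexOn s (Icc a b) fun x => |g x| ^ q)
    (hga : |g a| ≤ 1) (hgb : 1 ≤ |g b|) :
    ∫ t in (0:ℝ)..(1/2), t * (b ^ t * a ^ (1 - t) * |g (b ^ t * a ^ (1 - t))|) ≤
      (1/2 : ℝ) ^ (3 - 1/q) * (a * |g a| ^ s * |g b| ^ (1 - s) *
        g₁ ((b * |g b| ^ s / (a * |g a| ^ s)) ^ (q/2)) ^ (1/q)) := by
  have hb : 0 < b := ha.trans_le hab
  rw [← rpow_mul_rpow_one_div (abs_nonneg (g b)) (by linarith : q ≠ 0)]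
  exact integral_mul_le_of_rpow_le hq (by positivity) (by positivity) (by positivity)
    (fun t _ => by positivity) fun t ht =>
      mul_abs_rpow_le_of_sGeometricallyConvexOn ha hab (by linarith) hs hconv hga hgb
        (Icc_subset_Icc_right (by norm_num) ht)

theorem integral_mul_reflect_le_of_sGeometricallyConvexOn (ha : 0 < a) (hab : a ≤ b)
    (hq : 1 ≤ q) (hs : s ∈ Ioc (0:ℝ) 1)
    (hconv : SGeometricallyConvexOn s (Icc a b) fun x => |g x| ^ q)
    (hga : |g a| ≤ 1) (hgb : 1 ≤ |g b|) :
    ∫ t in (0:ℝ)..(1/2), t * (b ^ (1 - t) * a ^ t * |g (b ^ (1 - t) * a ^ t)|) ≤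
      (1/2 : ℝ) ^ (3 - 1/q) *
        (b * |g b| * g₁ ((a * |g a| ^ s / (b * |g b| ^ s)) ^ (q/2)) ^ (1/q)) := by
  have hb : 0 < b := ha.trans_le hab
  have hgb0 : 0 < |g b| := zero_lt_one.trans_le hgb
  calc _ ≤ (1/2 : ℝ) ^ (3 - 1/q) * (b * |g b| ^ s * (|g b| ^ (q * (1 - s))) ^ (1 / q) *
        g₁ ((a * |g a| ^ s / (b * |g b| ^ s)) ^ (q/2)) ^ (1/q)) := by
        refine integral_mul_le_of_rpow_le hq (by positivity) (by positivity) (by positivity)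
          (fun t _ => by positivity) fun t ht => ?_
        have := mul_abs_rpow_le_of_sGeometricallyConvexOn ha hab (by linarith) hs hconv hga hgb
          (t := 1 - t) ⟨by linarith [ht.2], by linarith [ht.1]⟩
        rw [sub_sub_cancel] at this
        exact this.trans_eq (by ring)
    _ = _ := by rw [rpow_mul_rpow_one_div hgb0.le (by linarith), mul_assoc b, ← rpow_add hgb0, add_sub_cancel, rpow_one]

end SGeometricallyConvex

theorem stmt_8_general
    (I : Set ℝ) (hI : I.OrdConnected) (hIpos : I ⊆ Set.Ioi (0:ℝ))
    (f f' : ℝ → ℝ)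
    (a b : ℝ) (ha : a ∈ interior I) (hb : b ∈ interior I) (hab : a < b)
    (hdiff : ∀ x ∈ interior I, HasDerivAt f (f' x) x)
    (hint : IntervalIntegrable f' volume a b)
    (q s : ℝ) (hq : 1 ≤ q) (hs : s ∈ Set.Ioc (0:ℝ) 1)
    (hconv : SGeometricallyConvexOn s (Set.Icc a b) (fun x => |f' x| ^ q))
    (hfa : |f' a| ≤ 1) (hfb : 1 ≤ |f' b|) :
    |f (Real.sqrt (a * b)) - (1 / (Real.log b - Real.log a)) * ∫ x in a..b, f x / x| ≤
      Real.log (b / a) * (1 / 2 : ℝ) ^ (3 - 1 / q) *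
        (a * |f' a| ^ s * |f' b| ^ (1 - s) * (g₁ ((b * |f' b| ^ s / (a * |f' a| ^ s)) ^ (q / 2))) ^ (1 / q)
         + b * |f' b| * (g₁ ((a * |f' a| ^ s / (b * |f' b| ^ s)) ^ (q / 2))) ^ (1 / q)) := by
  have ha0 : 0 < a := hIpos (interior_subset ha)
  have hb0 : 0 < b := hIpos (interior_subset hb)
  have hIcc : Icc a b ⊆ interior I := (convex_iff_ordConnected.2 hI).interior.ordConnected.out ha hb
  have hL : 0 ≤ log b - log a := sub_nonneg.2 (log_le_log ha0 hab.le)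
  calc _ ≤ _ := abs_sub_integral_div_self_le ha0 hab (fun x hx => hdiff x (hIcc hx)) hint
    _ ≤ (log b - log a) * ((1/2 : ℝ) ^ (3 - 1/q) * (a * |f' a| ^ s * |f' b| ^ (1 - s) *
            g₁ ((b * |f' b| ^ s / (a * |f' a| ^ s)) ^ (q/2)) ^ (1/q)) +
          (1/2 : ℝ) ^ (3 - 1/q) * (b * |f' b| *
            g₁ ((a * |f' a| ^ s / (b * |f' b| ^ s)) ^ (q/2)) ^ (1/q))) := by
        gcongr
        exacts [integral_mul_le_of_sGeometricallyConvexOn ha0 hab.le hq hs hconv hfa hfb,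
          integral_mul_reflect_le_of_sGeometricallyConvexOn ha0 hab.le hq hs hconv hfa hfb]
    _ = _ := by rw [log_div hb0.ne' ha0.ne']; ring

theorem stmt_8
    (I : Set ℝ) (hI : I.OrdConnected) (hIpos : I ⊆ Set.Ioi (0:ℝ))
    (f f' : ℝ → ℝ) (hfpos : ∀ x ∈ I, 0 < f x)
    (a b : ℝ) (ha : a ∈ interior I) (hb : b ∈ interior I) (hab : a < b)
    (hdiff : ∀ x ∈ interior I, HasDerivAt f (f' x) x)
    (hint : IntervalIntegrable f' volume a b)
    (q s : ℝ) (hq : 1 ≤ q) (hs : s ∈ Set.Ioc (0:ℝ) 1)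
    (hconv : SGeometricallyConvexOn s (Set.Icc a b) (fun x => |f' x| ^ q))
    (hfa : |f' a| ≤ 1) (hfb : 1 ≤ |f' b|) :
    |f (Real.sqrt (a * b)) - (1 / (Real.log b - Real.log a)) * ∫ x in a..b, f x / x| ≤
      Real.log (b / a) * (1 / 2 : ℝ) ^ (3 - 1 / q) *
        (a * |f' a| ^ s * |f' b| ^ (1 - s) * (g₁ ((b * |f' b| ^ s / (a * |f' a| ^ s)) ^ (q / 2))) ^ (1 / q)
         + b * |f' b| * (g₁ ((a * |f' a| ^ s / (b * |f' b| ^ s)) ^ (q / 2))) ^ (1 / q)) :=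
  stmt_8_general I hI hIpos f f' a b ha hb hab hdiff hint q s hq hs hconv hfa hfb
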